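/- In the capacitated reduction graph G_p (defined as above with w = 2^{|U_2|}), if every total assignment to the CNF formula satisfies at most p − 1 clauses, then for every pair (α, γ) of assignments to U_1 and U_3, the maximum α-γ flow in G_p is at least w·m. -/

import Mathlib

attribute [local instance] Classical.propDecidable

/-- A feasible `s`-`t` flow in a directed capacitated graph given by `cap`:
capacity constraints on every edge and conservation at every vertex other than `s`, `t`. -/
def IsFlow {V : Type*} [Fintype V] (cap : V → V → ℕ) (s t : V) (f : V → V → ℕ) : Prop :=
  (∀ u v, f u v ≤ cap u v) ∧
  ∀ v, v ≠ s → v ≠ t → ∑ u, f u v = ∑ u, f v u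

/-- The maximum `s`-`t` flow value: the supremum of net flow out of `s` over feasible flows. -/
noncomputable def maxFlow {V : Type*} [Fintype V] (cap : V → V → ℕ) (s t : V) : ℕ :=
  sSup {x : ℕ | ∃ f, IsFlow cap s t f ∧ ∑ v, f s v = x + ∑ v, f v s}


/-- A CNF clause over variables `U1 ⊕ U2 ⊕ U3`. -/
abbrev Clause3 (U1 U2 U3 : Type*) := Finset ((U1 ⊕ U2 ⊕ U3) × Bool)

/-- The assignment `a` to `U1` satisfies the clause `C`. -/
def sat3A {U1 U2 U3 : Type*} (a : U1 → Bool) (C : Clause3 U1 U2 U3) : Prop :=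
  ∃ l ∈ C, ∃ x : U1, l.1 = Sum.inl x ∧ a x = l.2

/-- The assignment `b` to `U2` satisfies the clause `C`. -/
def sat3B {U1 U2 U3 : Type*} (b : U2 → Bool) (C : Clause3 U1 U2 U3) : Prop :=
  ∃ l ∈ C, ∃ x : U2, l.1 = Sum.inr (Sum.inl x) ∧ b x = l.2

/-- The assignment `g` to `U3` satisfies the clause `C`. -/
def sat3G {U1 U2 U3 : Type*} (g : U3 → Bool) (C : Clause3 U1 U2 U3) : Prop :=
  ∃ l ∈ C, ∃ x : U3, l.1 = Sum.inr (Sum.inr x) ∧ g x = l.2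

/-- Per-`β` internal vertices of the capacitated reduction graph `G_p`. -/
inductive CMid (m : ℕ) where
  | bl (i : Fin m)   -- β_i^l
  | bc (i : Fin m)   -- β_i^c
  | br (i : Fin m)   -- β_i^r
  | bp               -- β'
  deriving DecidableEq, Fintype

/-- Vertices of the capacitated reduction graph `G_p`: assignments `α` to `U1`,
per-`β` internal vertices, clause vertices (`(i, 0)` is `C_i^⊨`, `(i, 1)` is `C_i^⊭`,
`(i, 2)` is `C_i`), the vertex `v_B`, and assignments `γ` to `U3`. -/
abbrev CV (U1 U2 U3 : Type*) (m : ℕ) :=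
  (U1 → Bool) ⊕ ((U2 → Bool) × CMid m) ⊕ (Fin m × Fin 3) ⊕ Unit ⊕ (U3 → Bool)

/-- Capacities of `G_p`: `(α, C_i^⊨)` of capacity `w` if `α ⊨ C_i`, else `(α, C_i^⊭)`
of capacity `w`; `(C_i^⊨, β_i^c)`, `(C_i^⊭, β_i^l)` of capacity 1 for every `β`;
`(β_i^l, β_i^r)` of capacity 1 iff `β ⊭ C_i`; `(β_i^l, β_i^c)`, `(β_i^c, β')`,
`(β_i^r, C_i)` of capacity 1; `(β', v_B)` of capacity `p − 1`; `(v_B, γ)` of capacity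
`w(p − 1)` for every `γ`; `(C_i, γ)` of capacity `w` iff `γ ⊭ C_i`. -/
noncomputable def ccap {U1 U2 U3 : Type*} {m : ℕ} (F : Fin m → Clause3 U1 U2 U3)
    (w p : ℕ) : CV U1 U2 U3 m → CV U1 U2 U3 m → ℕ
  | Sum.inl a, Sum.inr (Sum.inr (Sum.inl (i, j))) =>
      if j = 0 ∧ sat3A a (F i) then w else if j = 1 ∧ ¬ sat3A a (F i) then w else 0
  | Sum.inr (Sum.inr (Sum.inl (i, j))), Sum.inr (Sum.inl (_, CMid.bc i')) =>
      if j = 0 ∧ i = i' then 1 else 0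
  | Sum.inr (Sum.inr (Sum.inl (i, j))), Sum.inr (Sum.inl (_, CMid.bl i')) =>
      if j = 1 ∧ i = i' then 1 else 0
  | Sum.inr (Sum.inl (b, CMid.bl i)), Sum.inr (Sum.inl (b', CMid.br i')) =>
      if b = b' ∧ i = i' ∧ ¬ sat3B b (F i) then 1 else 0
  | Sum.inr (Sum.inl (b, CMid.bl i)), Sum.inr (Sum.inl (b', CMid.bc i')) =>
      if b = b' ∧ i = i' then 1 else 0
  | Sum.inr (Sum.inl (b, CMid.bc _)), Sum.inr (Sum.inl (b', CMid.bp)) =>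
      if b = b' then 1 else 0
  | Sum.inr (Sum.inl (_, CMid.br i)), Sum.inr (Sum.inr (Sum.inl (i', j))) =>
      if j = 2 ∧ i = i' then 1 else 0
  | Sum.inr (Sum.inl (_, CMid.bp)), Sum.inr (Sum.inr (Sum.inr (Sum.inl _))) => p - 1
  | Sum.inr (Sum.inr (Sum.inr (Sum.inl _))), Sum.inr (Sum.inr (Sum.inr (Sum.inr _))) =>
      w * (p - 1)
  | Sum.inr (Sum.inr (Sum.inl (i, j))), Sum.inr (Sum.inr (Sum.inr (Sum.inr g))) =>
      if j = 2 ∧ ¬ sat3G g (F i) then w else 0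
  | _, _ => 0

/-!
Fix `α` and `γ`. For every assignment `β` to `U2` and every clause `C_i`, send one unit from `α`
into `C_i^⊨` or `C_i^⊭` (whichever edge `α` has), into the gadget of `β`, and on to `γ`: through
`β_i^c`, `β'` and `v_B` if `(α, β, γ) ⊨ C_i`, through `β_i^r` and `C_i` otherwise. These `w·m`
paths superpose to a flow of value `w·m`. Every edge with an endpoint among `C_i^⊨, C_i^⊭, C_i`
is used only by the `w` paths of clause `i`, and every edge with an endpoint `β_i^l, β_i^c, β_i^r`
only by the path of `(β, i)`; the edge `(C_i, γ)` is used only when `γ ⊭ C_i`, which is when its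
capacity is `w`. The paths through `β'` and `v_B` are those of satisfied clauses, so the
hypothesis bounds their number by `p − 1` per `β`, hence by `w(p − 1)` in total.
-/

open Finset

theorem le_maxFlow {V : Type*} [Fintype V] {cap : V → V → ℕ} {s t : V} {f : V → V → ℕ}
    {x : ℕ} (hf : IsFlow cap s t f) (hx : ∑ v, f s v = x + ∑ v, f v s) :
    x ≤ maxFlow cap s t := by
  refine le_csSup ⟨∑ v, cap s v, ?_⟩ ⟨f, hf, hx⟩
  rintro y ⟨f', ⟨hcap, -⟩, hy⟩
  calc y ≤ y + ∑ v, f' v s := Nat.le_add_right _ _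
    _ = ∑ v, f' s v := hy.symm
    _ ≤ ∑ v, cap s v := sum_le_sum fun v _ => hcap s v

section WalkFlow

variable {V : Type*}

theorem List.sum_count_mk_left [Fintype V] [DecidableEq V] (L : List (V × V)) (v : V) :
    ∑ u, L.count (u, v) = (L.map Prod.snd).count v := by
  induction L with
  | nil => simp
  | cons x L ih =>
    obtain ⟨x₁, x₂⟩ := x
    simp only [List.count_cons, sum_add_distrib, ih, List.map_cons, beq_iff_eq,
      Prod.mk.injEq, ite_and, sum_ite_eq, mem_univ, if_true]

theorem List.sum_count_mk_right [Fintype V] [DecidableEq V] (L : List (V × V)) (u : V) :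
    ∑ v, L.count (u, v) = (L.map Prod.fst).count u := by
  induction L with
  | nil => simp
  | cons x L ih =>
    obtain ⟨x₁, x₂⟩ := x
    simp only [List.count_cons, sum_add_distrib, ih, List.map_cons, beq_iff_eq,
      Prod.mk.injEq, ite_and, sum_ite_eq, mem_univ, if_true, sum_ite_irrel, sum_const_zero]

/-- The edges traversed by the walk `s, l₁, …, lₙ, t`. -/
def walkEdges (s : V) (l : List V) (t : V) : List (V × V) := (s :: l).zip (l ++ [t])

def walkFlow [DecidableEq V] (s : V) (l : List V) (t : V) (u v : V) : ℕ :=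
  (walkEdges s l t).count (u, v)

theorem mem_of_mem_walkEdges {s t u v x : V} {l : List V} (h : (u, v) ∈ walkEdges s l t)
    (hx : u = x ∨ v = x) (hs : x ≠ s) (ht : x ≠ t) : x ∈ l := by
  obtain ⟨hu, hv⟩ := List.of_mem_zip h
  rcases hx with rfl | rfl
  · exact (List.mem_cons.1 hu).resolve_left hs
  · simpa [ht] using hv

theorem walkFlow_eq_ite [DecidableEq V] {s : V} {l : List V} (t : V) (hl : (s :: l).Nodup)
    (u v : V) : walkFlow s l t u v = if (u, v) ∈ walkEdges s l t then 1 else 0 := by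
  have hnd : (walkEdges s l t).Nodup :=
    List.Nodup.of_map Prod.fst (by rwa [walkEdges, List.map_fst_zip (by simp)])
  unfold walkFlow
  split_ifs with h
  · exact List.count_eq_one_of_mem hnd h
  · exact List.count_eq_zero_of_not_mem h

theorem sum_walkFlow_eq_card_filter [DecidableEq V] {ι : Type*} {s t : V} (K : Finset ι)
    (route : ι → List V) (hl : ∀ k, (s :: route k).Nodup) (u v : V) :
    ∑ k ∈ K, walkFlow s (route k) t u v = #{k ∈ K | (u, v) ∈ walkEdges s (route k) t} := by
  rw [card_filter]
  exact sum_congr rfl fun k _ => walkFlow_eq_ite t (hl k) u v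

variable [Fintype V] [DecidableEq V]

theorem sum_walkFlow_in (s : V) (l : List V) (t v : V) :
    ∑ u, walkFlow s l t u v = (l ++ [t]).count v := by
  simp only [walkFlow]
  rw [List.sum_count_mk_left, walkEdges, List.map_snd_zip (by simp)]

theorem sum_walkFlow_out (s : V) (l : List V) (t u : V) :
    ∑ v, walkFlow s l t u v = (s :: l).count u := by
  simp only [walkFlow]
  rw [List.sum_count_mk_right, walkEdges, List.map_fst_zip (by simp)]

theorem isFlow_sum_walkFlow {ι : Type*} {cap : V → V → ℕ} {s t : V} (hst : s ≠ t)
    (K : Finset ι) (route : ι → List V)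
    (hcap : ∀ u v, ∑ k ∈ K, walkFlow s (route k) t u v ≤ cap u v) :
    IsFlow cap s t (fun u v => ∑ k ∈ K, walkFlow s (route k) t u v) ∧
      ∑ v, ∑ k ∈ K, walkFlow s (route k) t s v =
        #K + ∑ v, ∑ k ∈ K, walkFlow s (route k) t v s := by
  have hin (v : V) : ∑ u, ∑ k ∈ K, walkFlow s (route k) t u v =
      ∑ k ∈ K, (route k ++ [t]).count v := by
    rw [sum_comm]; simp only [sum_walkFlow_in]
  have hout (u : V) : ∑ v, ∑ k ∈ K, walkFlow s (route k) t u v =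
      ∑ k ∈ K, (s :: route k).count u := by
    rw [sum_comm]; simp only [sum_walkFlow_out]
  refine ⟨⟨hcap, fun v hvs hvt => ?_⟩, ?_⟩ <;> simp only [hin, hout]
  · simp [hvs.symm, hvt.symm]
  · simp [hst.symm, sum_add_distrib, add_comm]

end WalkFlow

section Reduction

variable {U1 U2 U3 : Type*} {m : ℕ}

-- `clauseV i 0`, `clauseV i 1`, `clauseV i 2` are `C_i^⊨`, `C_i^⊭`, `C_i`, and `hubV` is `v_B`.
abbrev clauseV (i : Fin m) (j : Fin 3) : CV U1 U2 U3 m := Sum.inr (Sum.inr (Sum.inl (i, j)))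
abbrev gadgetV (b : U2 → Bool) (c : CMid m) : CV U1 U2 U3 m := Sum.inr (Sum.inl (b, c))
abbrev hubV : CV U1 U2 U3 m := Sum.inr (Sum.inr (Sum.inr (Sum.inl ())))
abbrev sinkV (g : U3 → Bool) : CV U1 U2 U3 m := Sum.inr (Sum.inr (Sum.inr (Sum.inr g)))

variable (F : Fin m → Clause3 U1 U2 U3) (a : U1 → Bool) (g : U3 → Bool)

noncomputable def satClauses (b : U2 → Bool) : Finset (Fin m) :=
  {i | sat3A a (F i) ∨ sat3B b (F i) ∨ sat3G g (F i)}

noncomputable def route (k : (U2 → Bool) × Fin m) : List (CV U1 U2 U3 m) :=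
  if sat3A a (F k.2) then [clauseV k.2 0, gadgetV k.1 (.bc k.2), gadgetV k.1 .bp, hubV]
  else if sat3B k.1 (F k.2) ∨ sat3G g (F k.2) then
    [clauseV k.2 1, gadgetV k.1 (.bl k.2), gadgetV k.1 (.bc k.2), gadgetV k.1 .bp, hubV]
  else [clauseV k.2 1, gadgetV k.1 (.bl k.2), gadgetV k.1 (.br k.2), clauseV k.2 2]

theorem nodup_route (k : (U2 → Bool) × Fin m) : (Sum.inl a :: route F a g k).Nodup := by
  unfold route; split_ifs <;> simp

variable {F a g}

theorem eq_of_mem_route_clauseV {i : Fin m} {j : Fin 3} {k : (U2 → Bool) × Fin m}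
    (h : clauseV i j ∈ route F a g k) : k.2 = i := by
  unfold route at h; split_ifs at h <;> grind

theorem eq_of_mem_route_gadgetV {b : U2 → Bool} {c : CMid m} (hc : c ≠ .bp)
    {k k' : (U2 → Bool) × Fin m} (h : gadgetV b c ∈ route F a g k)
    (h' : gadgetV b c ∈ route F a g k') : k = k' := by
  unfold route at h h'; split_ifs at h h' <;> grind

theorem mem_satClauses_of_mem_route_gadgetV_bp {b : U2 → Bool} {k : (U2 → Bool) × Fin m}
    (h : gadgetV b .bp ∈ route F a g k) : k.1 = b ∧ k.2 ∈ satClauses F a g b := by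
  unfold route at h; split_ifs at h <;> grind [satClauses]

theorem mem_satClauses_of_mem_route_hubV {k : (U2 → Bool) × Fin m}
    (h : hubV ∈ route F a g k) : k.2 ∈ satClauses F a g k.1 := by
  unfold route at h; split_ifs at h <;> grind [satClauses]

variable [Fintype U2] [DecidableEq U2] [DecidableEq (CV U1 U2 U3 m)]

variable (F a g) in
noncomputable def routeFlow (u v : CV U1 U2 U3 m) : ℕ :=
  ∑ k, walkFlow (Sum.inl a) (route F a g k) (sinkV g) u v

theorem routeFlow_le_of_clauseV {u v : CV U1 U2 U3 m} {i : Fin m} {j : Fin 3}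
    (hx : u = clauseV i j ∨ v = clauseV i j) : routeFlow F a g u v ≤ 2 ^ Fintype.card U2 := by
  rw [routeFlow, sum_walkFlow_eq_card_filter _ _ (nodup_route F a g)]
  calc _ ≤ #(univ : Finset (U2 → Bool)) := by
        refine card_le_card_of_injOn Prod.fst (fun _ _ => mem_univ _) fun k hk k' hk' hkk' => ?_
        simp only [coe_filter, mem_univ, true_and, Set.mem_ofPred_eq] at hk hk'
        exact Prod.ext hkk'
          ((eq_of_mem_route_clauseV (mem_of_mem_walkEdges hk hx (by simp) (by simp))).trans
            (eq_of_mem_route_clauseV (mem_of_mem_walkEdges hk' hx (by simp) (by simp))).symm)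
    _ = 2 ^ Fintype.card U2 := by simp

theorem routeFlow_le_one_of_gadgetV {u v : CV U1 U2 U3 m} {b : U2 → Bool} {c : CMid m}
    (hc : c ≠ .bp) (hx : u = gadgetV b c ∨ v = gadgetV b c) : routeFlow F a g u v ≤ 1 := by
  rw [routeFlow, sum_walkFlow_eq_card_filter _ _ (nodup_route F a g)]
  refine card_le_one.2 fun k hk k' hk' => ?_
  simp only [mem_filter, mem_univ, true_and] at hk hk'
  exact eq_of_mem_route_gadgetV hc (mem_of_mem_walkEdges hk hx (by simp) (by simp))
    (mem_of_mem_walkEdges hk' hx (by simp) (by simp))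

theorem routeFlow_gadgetV_bp_le (b : U2 → Bool) (v : CV U1 U2 U3 m) :
    routeFlow F a g (gadgetV b .bp) v ≤ #(satClauses F a g b) := by
  rw [routeFlow, sum_walkFlow_eq_card_filter _ _ (nodup_route F a g)]
  refine card_le_card_of_injOn Prod.snd (fun k hk => ?_) fun k hk k' hk' hkk' => ?_
  · simp only [coe_filter, mem_univ, true_and, Set.mem_ofPred_eq] at hk
    exact (mem_satClauses_of_mem_route_gadgetV_bp
      (mem_of_mem_walkEdges hk (.inl rfl) (by simp) (by simp))).2
  · simp only [coe_filter, mem_univ, true_and, Set.mem_ofPred_eq] at hk hk'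
    exact Prod.ext ((mem_satClauses_of_mem_route_gadgetV_bp
      (mem_of_mem_walkEdges hk (.inl rfl) (by simp) (by simp))).1.trans
        (mem_satClauses_of_mem_route_gadgetV_bp
          (mem_of_mem_walkEdges hk' (.inl rfl) (by simp) (by simp))).1.symm) hkk'

theorem routeFlow_hubV_le (v : CV U1 U2 U3 m) :
    routeFlow F a g hubV v ≤ ∑ b, #(satClauses F a g b) := by
  rw [routeFlow, sum_walkFlow_eq_card_filter _ _ (nodup_route F a g)]
  calc _ ≤ #(univ.sigma fun b => satClauses F a g b) := by
        refine card_le_card_of_injOn (fun k => ⟨k.1, k.2⟩) (fun k hk => ?_) fun k _ k' _ h => ?_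
        · simp only [coe_filter, mem_univ, true_and, Set.mem_ofPred_eq] at hk
          simpa using mem_satClauses_of_mem_route_hubV
            (mem_of_mem_walkEdges hk (.inl rfl) (by simp) (by simp))
        · simpa [Prod.ext_iff] using h
    _ = ∑ b, #(satClauses F a g b) := card_sigma _ _

theorem routeFlow_le_ccap {p : ℕ} (hsat : ∀ b, #(satClauses F a g b) ≤ p - 1)
    (u v : CV U1 U2 U3 m) : routeFlow F a g u v ≤ ccap F (2 ^ Fintype.card U2) p u v := by
  by_cases h : ∃ k, (u, v) ∈ walkEdges (Sum.inl a) (route F a g k) (sinkV g)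
  swap
  · simp only [not_exists] at h
    simp [routeFlow, sum_walkFlow_eq_card_filter _ _ (nodup_route F a g), h]
  have hhub : ∑ b, #(satClauses F a g b) ≤ 2 ^ Fintype.card U2 * (p - 1) := by
    simpa using sum_le_card_nsmul univ _ _ fun b _ => hsat b
  obtain ⟨⟨b, i⟩, hk⟩ := h
  unfold route walkEdges at hk
  split_ifs at hk with hA hBG <;>
    simp only [Fin.isValue, List.cons_append, List.nil_append, List.zip_cons_cons,
      List.zip_nil_right, List.mem_cons, Prod.mk.injEq, List.not_mem_nil, or_false] at hk
  · obtain ⟨rfl, rfl⟩ | ⟨rfl, rfl⟩ | ⟨rfl, rfl⟩ | ⟨rfl, rfl⟩ | ⟨rfl, rfl⟩ := hk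
    · exact (routeFlow_le_of_clauseV (.inr rfl)).trans_eq (by simp [ccap, hA])
    · exact (routeFlow_le_one_of_gadgetV (by simp) (.inr rfl)).trans_eq (by simp [ccap])
    · exact (routeFlow_le_one_of_gadgetV (by simp) (.inl rfl)).trans_eq (by simp [ccap])
    · exact (routeFlow_gadgetV_bp_le b _).trans (hsat b)
    · exact (routeFlow_hubV_le _).trans hhub
  · obtain ⟨rfl, rfl⟩ | ⟨rfl, rfl⟩ | ⟨rfl, rfl⟩ | ⟨rfl, rfl⟩ | ⟨rfl, rfl⟩ | ⟨rfl, rfl⟩ := hk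
    · exact (routeFlow_le_of_clauseV (.inr rfl)).trans_eq (by simp [ccap, hA])
    · exact (routeFlow_le_one_of_gadgetV (by simp) (.inr rfl)).trans_eq (by simp [ccap])
    · exact (routeFlow_le_one_of_gadgetV (by simp) (.inl rfl)).trans_eq (by simp [ccap])
    · exact (routeFlow_le_one_of_gadgetV (by simp) (.inl rfl)).trans_eq (by simp [ccap])
    · exact (routeFlow_gadgetV_bp_le b _).trans (hsat b)
    · exact (routeFlow_hubV_le _).trans hhub
  · obtain ⟨rfl, rfl⟩ | ⟨rfl, rfl⟩ | ⟨rfl, rfl⟩ | ⟨rfl, rfl⟩ | ⟨rfl, rfl⟩ := hk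
    · exact (routeFlow_le_of_clauseV (.inr rfl)).trans_eq (by simp [ccap, hA])
    · exact (routeFlow_le_one_of_gadgetV (by simp) (.inr rfl)).trans_eq (by simp [ccap])
    · exact (routeFlow_le_one_of_gadgetV (by simp) (.inl rfl)).trans_eq
        (by simp [ccap, not_or.1 hBG])
    · exact (routeFlow_le_one_of_gadgetV (by simp) (.inl rfl)).trans_eq (by simp [ccap])
    · exact (routeFlow_le_of_clauseV (.inl rfl)).trans_eq (by simp [ccap, not_or.1 hBG])

end Reduction

theorem stmt12_general {U1 U2 U3 : Type*} [Fintype U1] [DecidableEq U1] [Fintype U2]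
    [DecidableEq U2] [Fintype U3] [DecidableEq U3] {m p : ℕ}
    (F : Fin m → Clause3 U1 U2 U3)
    (hsat : ∀ (a : U1 → Bool) (b : U2 → Bool) (g : U3 → Bool),
      (Finset.univ.filter fun i =>
        sat3A a (F i) ∨ sat3B b (F i) ∨ sat3G g (F i)).card ≤ p - 1) :
    ∀ (a : U1 → Bool) (g : U3 → Bool),
      2 ^ Fintype.card U2 * m ≤
        maxFlow (ccap F (2 ^ Fintype.card U2) p)
          (Sum.inl a) (Sum.inr (Sum.inr (Sum.inr (Sum.inr g)))) := by
  intro a g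
  obtain ⟨hflow, hvalue⟩ := isFlow_sum_walkFlow Sum.inl_ne_inr univ (route F a g)
    (routeFlow_le_ccap fun b => hsat a b g)
  refine le_maxFlow hflow (hvalue.trans ?_)
  simp [Fintype.card_prod]

/-- if every total assignment (triple `(α, β, γ)`) satisfies at most
`p − 1` clauses, then with `w = 2^{|U2|}`, for every pair `(α, γ)` the maximum `α`-`γ`
flow in `G_p` is at least `w·m`. -/
theorem stmt12 {U1 U2 U3 : Type*} [Fintype U1] [DecidableEq U1] [Fintype U2]
    [DecidableEq U2] [Fintype U3] [DecidableEq U3] {m p : ℕ}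
    (hp1 : 1 ≤ p) (hpm : p ≤ m) (F : Fin m → Clause3 U1 U2 U3)
    (hsat : ∀ (a : U1 → Bool) (b : U2 → Bool) (g : U3 → Bool),
      (Finset.univ.filter fun i =>
        sat3A a (F i) ∨ sat3B b (F i) ∨ sat3G g (F i)).card ≤ p - 1) :
    ∀ (a : U1 → Bool) (g : U3 → Bool),
      2 ^ Fintype.card U2 * m ≤
        maxFlow (ccap F (2 ^ Fintype.card U2) p)
          (Sum.inl a) (Sum.inr (Sum.inr (Sum.inr (Sum.inr g)))) :=
  stmt12_general F hsat
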